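/- A minimal tight IC POVM {Π_j}_{j=0}^{d²-1} on ℂ^d is a generalized SIC if and only if tr(Π_j²) is independent of j, if and only if the purity tr(Π_j²)/tr(Π_j)² is independent of j, if and only if the family is equiangular (tr(Π_j Π_k) is the same for all j ≠ k). -/

import Mathlib

open Matrix ComplexOrder

noncomputable section

abbrev Mat (d : ℕ) := Matrix (Fin d) (Fin d) ℂ

/-- The real vector space of Hermitian `d × d` complex matrices. -/
abbrev HermM (d : ℕ) : Submodule ℝ (Mat d) := selfAdjoint.submodule ℝ (Mat d)

/-- The identity matrix as a Hermitian matrix. -/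
def hermOne (d : ℕ) : HermM d := ⟨1, IsSelfAdjoint.one (Mat d)⟩

/-- The superoperator `|A⟩⟩⟨⟨B| : X ↦ tr(B X) • A` on Hermitian matrices. -/
def outerSO (d : ℕ) (A B : HermM d) : HermM d →ₗ[ℝ] HermM d :=
  (Complex.reLm ∘ₗ Matrix.traceLinearMap (Fin d) ℝ ℂ ∘ₗ
    LinearMap.mulLeft ℝ (B : Mat d) ∘ₗ (HermM d).subtype).smulRight A

/-! Evaluating the frame condition at `Π_k` and using that the `d²` operators `Π_j` are linearly
independent (they span the `d²`-dimensional real space of Hermitian matrices) gives the overlap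
formula `d tr(Π_j Π_k) = tr Π_j (α δ_jk + β tr Π_k)`. Each of the four conditions is therefore
equivalent to all traces `tr Π_j` being equal (and then equal to `1/d`): the diagonal overlap
`t (α + β t) / d` and the purity `(α / t + β) / d` are injective in `t > 0`, and the off-diagonal
overlaps `β t_j t_k / d` can be compared through a third index since `d² ≥ 3`. -/

theorem exists_forall_eq_iff_forall_eq {ι α : Type*} [Nonempty α] {f : ι → α} :
    (∃ a, ∀ i, f i = a) ↔ ∀ i j, f i = f j := by
  refine ⟨fun ⟨a, ha⟩ i j => (ha i).trans (ha j).symm, fun h => ?_⟩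
  cases isEmpty_or_nonempty ι with
  | inl _ => exact ⟨Classical.arbitrary α, isEmptyElim⟩
  | inr hι => exact ⟨f hι.some, fun j => h j _⟩

theorem Matrix.IsHermitian.ofReal_re_trace_mul {n : Type*} [Fintype n] {A B : Matrix n n ℂ}
    (hA : A.IsHermitian) (hB : B.IsHermitian) : (((A * B).trace.re : ℝ) : ℂ) = (A * B).trace :=
  Complex.conj_eq_iff_re.mp <| by
    change star _ = _
    rw [← trace_conjTranspose, conjTranspose_mul, hA.eq, hB.eq, trace_mul_comm]

theorem exists_trace_mul_self_eq_iff {d : ℕ} {ι : Type*} (P : ι → HermM d) :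
    (∃ s : ℂ, ∀ j, ((P j : Mat d) * P j).trace = s) ↔
      ∃ s : ℝ, ∀ j, ((P j : Mat d) * P j).trace.re = s :=
  ⟨fun ⟨s, hs⟩ => ⟨s.re, fun j => by rw [hs]⟩,
    fun ⟨s, hs⟩ => ⟨s, fun j => by rw [← hs j, IsHermitian.ofReal_re_trace_mul (P j).2 (P j).2]⟩⟩

theorem exists_trace_mul_eq_of_ne_iff {d : ℕ} {ι : Type*} (P : ι → HermM d) :
    (∃ z : ℂ, ∀ j k, j ≠ k → ((P j : Mat d) * P k).trace = z) ↔
      ∃ z : ℝ, ∀ j k, j ≠ k → ((P j : Mat d) * P k).trace.re = z :=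
  ⟨fun ⟨z, hz⟩ => ⟨z.re, fun j k hjk => by rw [hz j k hjk]⟩,
    fun ⟨z, hz⟩ => ⟨z, fun j k hjk => by
      rw [← hz j k hjk, IsHermitian.ofReal_re_trace_mul (P j).2 (P k).2]⟩⟩

theorem trace_smul_mul_smul_eq_ofReal_iff {n : Type*} [Fintype n] {A B : Matrix n n ℂ}
    (hA : A.IsHermitian) (hB : B.IsHermitian) (r x : ℝ) :
    (((r : ℂ) • A) * ((r : ℂ) • B)).trace = x ↔ r ^ 2 * (A * B).trace.re = x := by
  rw [smul_mul_smul_comm, trace_smul, ← hA.ofReal_re_trace_mul hB, smul_eq_mul, ← sq,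
    ← Complex.ofReal_pow, ← Complex.ofReal_mul, Complex.ofReal_inj, Complex.ofReal_re]

def hermSkewEquiv (d : ℕ) : HermM d ≃ₗ[ℝ] skewAdjoint.submodule ℝ (Mat d) where
  toFun X := ⟨Complex.I • (X : Mat d), X.2.I_smul_mem_skewAdjoint (K := ℂ)⟩
  invFun Y := ⟨-(Complex.I • (Y : Mat d)),
    (IsSelfAdjoint.I_smul_of_mem_skewAdjoint (K := ℂ) Y.2).neg⟩
  map_add' X Y := by ext1; simp [smul_add]
  map_smul' r X := Subtype.ext (smul_comm Complex.I r (X : Mat d))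
  left_inv X := by ext1; simp [smul_smul]
  right_inv Y := by ext1; simp [smul_smul]

theorem finrank_hermM (d : ℕ) : Module.finrank ℝ (HermM d) = d ^ 2 := by
  have h := (StarModule.decomposeProdAdjoint ℝ (Mat d)).finrank_eq
  change _ = Module.finrank ℝ (HermM d × skewAdjoint.submodule ℝ (Mat d)) at h
  rw [Module.finrank_prod, ← (hermSkewEquiv d).finrank_eq, Module.finrank_matrix,
    Complex.finrank_real_complex, Fintype.card_fin] at h
  rw [sq]; omega

theorem linearIndependent_of_forall_isHermitian_mem_span {d : ℕ} {ι : Type*} [Fintype ι]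
    {P : ι → HermM d} (hcard : Fintype.card ι = d ^ 2)
    (hIC : ∀ A : Mat d, A.IsHermitian → A ∈ Submodule.span ℝ (Set.range fun j => (P j : Mat d))) :
    LinearIndependent ℝ P := by
  refine linearIndependent_of_top_le_span_of_card_eq_finrank (fun A _ => ?_)
    (hcard.trans (finrank_hermM d).symm)
  obtain ⟨a, ha⟩ := (Submodule.mem_span_range_iff_exists_fun ℝ).mp (hIC A A.2)
  exact (Submodule.mem_span_range_iff_exists_fun ℝ).mpr ⟨a, Subtype.ext (by simpa using ha)⟩

theorem outerSO_apply {d : ℕ} (A B X : HermM d) :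
    outerSO d A B X = ((B : Mat d) * X).trace.re • A := rfl

/-- The overlap formula `D tr(Π_j Π_k) = tr Π_j (α δ_jk + β tr Π_k)` of a minimal tight IC POVM,
for abstract traces `t` and overlaps `c`. -/
def IsTightOverlap {ι : Type*} [DecidableEq ι] (D α β : ℝ) (t : ι → ℝ) (c : ι → ι → ℝ) : Prop :=
  ∀ j k, D * c j k = t j * ((if j = k then α else 0) + β * t k)

theorem isTightOverlap_of_frame {d : ℕ} {ι : Type*} [Fintype ι] [DecidableEq ι]
    {P : ι → HermM d} {α β : ℝ} (hli : LinearIndependent ℝ P) (hsum : ∑ j, (P j : Mat d) = 1)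
    (htr : ∀ j, (P j : Mat d).trace.re ≠ 0)
    (hframe : (d : ℝ) • ∑ j, ((P j : Mat d).trace.re)⁻¹ • outerSO d (P j) (P j) =
      α • LinearMap.id + β • outerSO d (hermOne d) (hermOne d)) :
    IsTightOverlap d α β (fun j => (P j : Mat d).trace.re)
      (fun j k => ((P j : Mat d) * P k).trace.re) := by
  intro j k
  have hone : ∑ i, P i = hermOne d := Subtype.ext (by simp [hsum, hermOne])
  have hcoef :
      ∑ i, ((d : ℝ) * ((P i : Mat d).trace.re)⁻¹ * ((P i : Mat d) * P k).trace.re) • P i =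
        ∑ i, ((if i = k then α else 0) + β * (P k : Mat d).trace.re) • P i := calc
    _ = (d : ℝ) • ∑ i, ((P i : Mat d).trace.re)⁻¹ • outerSO d (P i) (P i) (P k) := by
      simp only [outerSO_apply, Finset.smul_sum, smul_smul, mul_assoc]
    _ = α • P k + β • outerSO d (hermOne d) (hermOne d) (P k) := by
      simpa using LinearMap.congr_fun hframe (P k)
    _ = _ := by
      simp [outerSO_apply, add_smul, Finset.sum_add_distrib, ite_smul, ← Finset.smul_sum, hone,
        smul_smul, hermOne]
  have hj := Fintype.linearIndependent_iffₛ.mp hli _ _ hcoef j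
  rw [← hj]
  field_simp [htr j]

namespace IsTightOverlap

variable {ι : Type*} [DecidableEq ι] {D α β : ℝ} {t : ι → ℝ} {c : ι → ι → ℝ}

theorem diag_eq (h : IsTightOverlap D α β t c) (hD : D ≠ 0) (j : ι) :
    c j j = t j * (α + β * t j) / D := by
  rw [eq_div_iff hD, mul_comm, h, if_pos rfl]

theorem eq_of_ne (h : IsTightOverlap D α β t c) (hD : D ≠ 0) {j k : ι} (hjk : j ≠ k) :
    c j k = t j * β * t k / D := by
  rw [eq_div_iff hD, mul_comm, h, if_neg hjk, zero_add, mul_assoc]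

theorem diag_eq_diag_iff (h : IsTightOverlap D α β t c) (hD : D ≠ 0) (ht : ∀ j, 0 < t j)
    (hα : 0 ≤ α) (hβ : 0 < β) {j k : ι} : c j j = c k k ↔ t j = t k := by
  rw [h.diag_eq hD, h.diag_eq hD, div_left_inj' hD]
  refine ⟨fun hc => ?_, fun htjk => by rw [htjk]⟩
  have hpos : 0 < α + β * (t j + t k) := by have := ht j; have := ht k; positivity
  have : (t j - t k) * (α + β * (t j + t k)) = 0 := by linear_combination hc
  exact sub_eq_zero.mp ((mul_eq_zero.mp this).resolve_right hpos.ne')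

theorem purity_eq_purity_iff (h : IsTightOverlap D α β t c) (hD : D ≠ 0) (ht : ∀ j, t j ≠ 0)
    (hα : α ≠ 0) {j k : ι} : c j j / t j ^ 2 = c k k / t k ^ 2 ↔ t j = t k := by
  have hpurity : ∀ j, c j j / t j ^ 2 = (α * (t j)⁻¹ + β) / D := fun j => by
    rw [h.diag_eq hD]
    field_simp [ht j]
  rw [hpurity, hpurity, div_left_inj' hD, add_left_inj, mul_right_inj' hα, _root_.inv_inj]

theorem exists_diag_eq_iff (h : IsTightOverlap D α β t c) (hD : D ≠ 0) (ht : ∀ j, 0 < t j)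
    (hα : 0 ≤ α) (hβ : 0 < β) : (∃ s, ∀ j, c j j = s) ↔ ∀ j k, t j = t k :=
  exists_forall_eq_iff_forall_eq.trans <| forall₂_congr fun _ _ => h.diag_eq_diag_iff hD ht hα hβ

theorem exists_purity_eq_iff (h : IsTightOverlap D α β t c) (hD : D ≠ 0) (ht : ∀ j, t j ≠ 0)
    (hα : α ≠ 0) : (∃ u, ∀ j, c j j / t j ^ 2 = u) ↔ ∀ j k, t j = t k :=
  exists_forall_eq_iff_forall_eq.trans <| forall₂_congr fun _ _ => h.purity_eq_purity_iff hD ht hα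

theorem exists_offDiag_eq_iff [Fintype ι] (h : IsTightOverlap D α β t c) (hD : D ≠ 0)
    (ht : ∀ j, t j ≠ 0) (hβ : β ≠ 0) (hcard : 3 ≤ Fintype.card ι) :
    (∃ z, ∀ j k, j ≠ k → c j k = z) ↔ ∀ j k, t j = t k := by
  constructor
  · rintro ⟨z, hz⟩ j k
    obtain ⟨m, -, hm⟩ := Finset.exists_mem_notMem_of_card_lt_card (s := {j, k})
      (t := Finset.univ) (Finset.card_le_two.trans_lt (by rw [Finset.card_univ]; omega))
    simp only [Finset.mem_insert, Finset.mem_singleton, not_or] at hm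
    have hmjk : c m j = c m k := (hz m j hm.1).trans (hz m k hm.2).symm
    rw [h.eq_of_ne hD hm.1, h.eq_of_ne hD hm.2, div_left_inj' hD] at hmjk
    exact mul_left_cancel₀ (mul_ne_zero (ht m) hβ) hmjk
  · intro hconst
    obtain ⟨i⟩ : Nonempty ι := Fintype.card_pos_iff.mp (by omega)
    exact ⟨t i * β * t i / D, fun j k hjk => by rw [h.eq_of_ne hD hjk, hconst j i, hconst k i]⟩

theorem genSIC_iff [Fintype ι] (h : IsTightOverlap D α β t c) (hD : 0 < D) (ht : ∀ j, 0 < t j)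
    (hα : 0 < α) (hβ : 0 < β) (hsum : ∑ j, t j = D) (hcard : (Fintype.card ι : ℝ) = D ^ 2) :
    (∃ α' ζ : ℝ, 0 < α' ∧ ∀ j k, D ^ 2 * c j k = if j = k then α' + ζ else ζ) ↔
      ∀ j k, t j = t k := by
  constructor
  · rintro ⟨α', ζ, -, hGS⟩ j k
    refine (h.diag_eq_diag_iff hD.ne' ht hα.le hβ).mp (mul_left_cancel₀ (pow_ne_zero 2 hD.ne') ?_)
    rw [hGS, hGS, if_pos rfl, if_pos rfl]
  · intro hconst
    have hinv : ∀ j, t j = D⁻¹ := fun j => by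
      have : D ^ 2 * t j = D := by
        rw [← hcard, ← hsum, ← nsmul_eq_mul, ← Finset.card_univ, ← Finset.sum_const]
        exact Finset.sum_congr rfl fun k _ => hconst j k
      exact eq_inv_of_mul_eq_one_left (mul_left_cancel₀ hD.ne' (by linear_combination this))
    refine ⟨α, β / D, hα, fun j k => ?_⟩
    split_ifs with hjk
    · rw [← hjk, h.diag_eq hD.ne', hinv]
      field_simp
    · rw [h.eq_of_ne hD.ne' hjk, hinv, hinv]
      field_simp

end IsTightOverlap

theorem minimal_tightIC_genSIC_iffs_general (d : ℕ) (hd : 2 ≤ d)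
    (P : Fin (d ^ 2) → HermM d) (α β : ℝ)
    (htrpos : ∀ j, 0 < (Matrix.trace (P j : Mat d)).re)
    (hsum : ∑ j, (P j : Mat d) = 1)
    (hIC : ∀ A : Mat d, A.IsHermitian →
      A ∈ Submodule.span ℝ (Set.range fun j => (P j : Mat d)))
    (hα : 0 < α) (hβ : 0 < β)
    (hframe : (d : ℝ) • ∑ j, ((Matrix.trace (P j : Mat d)).re)⁻¹ • outerSO d (P j) (P j) =
      α • LinearMap.id + β • outerSO d (hermOne d) (hermOne d)) :
    ((∃ α' ζ : ℝ, 0 < α' ∧ ∀ j k,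
        Matrix.trace (((d : ℂ) • (P j : Mat d)) * ((d : ℂ) • (P k : Mat d))) =
          if j = k then ((α' : ℂ) + (ζ : ℂ)) else (ζ : ℂ)) ↔
      (∃ s : ℂ, ∀ j, Matrix.trace ((P j : Mat d) * (P j : Mat d)) = s)) ∧
    ((∃ α' ζ : ℝ, 0 < α' ∧ ∀ j k,
        Matrix.trace (((d : ℂ) • (P j : Mat d)) * ((d : ℂ) • (P k : Mat d))) =
          if j = k then ((α' : ℂ) + (ζ : ℂ)) else (ζ : ℂ)) ↔
      (∃ u : ℝ, ∀ j, (Matrix.trace ((P j : Mat d) * (P j : Mat d))).re /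
        (Matrix.trace (P j : Mat d)).re ^ 2 = u)) ∧
    ((∃ α' ζ : ℝ, 0 < α' ∧ ∀ j k,
        Matrix.trace (((d : ℂ) • (P j : Mat d)) * ((d : ℂ) • (P k : Mat d))) =
          if j = k then ((α' : ℂ) + (ζ : ℂ)) else (ζ : ℂ)) ↔
      (∃ z : ℂ, ∀ j k, j ≠ k →
        Matrix.trace ((P j : Mat d) * (P k : Mat d)) = z)) := by
  have hD : (0 : ℝ) < d := Nat.cast_pos.mpr (by omega)
  have htr j : (P j : Mat d).trace.re ≠ 0 := (htrpos j).ne'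
  have hover := isTightOverlap_of_frame
    (linearIndependent_of_forall_isHermitian_mem_span (Fintype.card_fin _) hIC) hsum htr hframe
  have hsumt : ∑ j, (P j : Mat d).trace.re = d := by
    rw [← Complex.re_sum, ← trace_sum, hsum, trace_one, Fintype.card_fin, Complex.natCast_re]
  have hGS : (∃ α' ζ : ℝ, 0 < α' ∧ ∀ j k,
      Matrix.trace (((d : ℂ) • (P j : Mat d)) * ((d : ℂ) • (P k : Mat d))) =
        if j = k then ((α' : ℂ) + (ζ : ℂ)) else (ζ : ℂ)) ↔
      ∀ j k, (P j : Mat d).trace.re = (P k : Mat d).trace.re := by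
    rw [← hover.genSIC_iff hD htrpos hα hβ hsumt (by simp)]
    refine exists₂_congr fun α' ζ => and_congr_right' <| forall₂_congr fun j k => ?_
    rw [← Complex.ofReal_natCast, ← Complex.ofReal_add, ← apply_ite Complex.ofReal,
      trace_smul_mul_smul_eq_ofReal_iff (P j).2 (P k).2]
  have hcard : 3 ≤ Fintype.card (Fin (d ^ 2)) := by
    rw [Fintype.card_fin]; nlinarith
  exact ⟨hGS.trans ((exists_trace_mul_self_eq_iff P).trans
      (hover.exists_diag_eq_iff hD.ne' htrpos hα.le hβ)).symm,
    hGS.trans (hover.exists_purity_eq_iff hD.ne' htr hα.ne').symm,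
    hGS.trans ((exists_trace_mul_eq_of_ne_iff P).trans
      (hover.exists_offDiag_eq_iff hD.ne' htr hβ.ne' hcard)).symm⟩

/-- A minimal tight IC POVM is a generalized SIC iff tr(Π_j²) is
independent of j, iff the purity tr(Π_j²)/tr(Π_j)² is independent of j, iff the
family is equiangular. -/
theorem minimal_tightIC_genSIC_iffs (d : ℕ) (hd : 2 ≤ d)
    (P : Fin (d ^ 2) → HermM d) (α β : ℝ)
    (hpsd : ∀ j, ((P j : Mat d)).PosSemidef)
    (htrpos : ∀ j, 0 < (Matrix.trace (P j : Mat d)).re)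
    (hsum : ∑ j, (P j : Mat d) = 1)
    (hIC : ∀ A : Mat d, A.IsHermitian →
      A ∈ Submodule.span ℝ (Set.range fun j => (P j : Mat d)))
    (hα : 0 < α) (hβ : 0 < β)
    (hframe : (d : ℝ) • ∑ j, ((Matrix.trace (P j : Mat d)).re)⁻¹ • outerSO d (P j) (P j) =
      α • LinearMap.id + β • outerSO d (hermOne d) (hermOne d)) :
    ((∃ α' ζ : ℝ, 0 < α' ∧ ∀ j k,
        Matrix.trace (((d : ℂ) • (P j : Mat d)) * ((d : ℂ) • (P k : Mat d))) =
          if j = k then ((α' : ℂ) + (ζ : ℂ)) else (ζ : ℂ)) ↔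
      (∃ s : ℂ, ∀ j, Matrix.trace ((P j : Mat d) * (P j : Mat d)) = s)) ∧
    ((∃ α' ζ : ℝ, 0 < α' ∧ ∀ j k,
        Matrix.trace (((d : ℂ) • (P j : Mat d)) * ((d : ℂ) • (P k : Mat d))) =
          if j = k then ((α' : ℂ) + (ζ : ℂ)) else (ζ : ℂ)) ↔
      (∃ u : ℝ, ∀ j, (Matrix.trace ((P j : Mat d) * (P j : Mat d))).re /
        (Matrix.trace (P j : Mat d)).re ^ 2 = u)) ∧
    ((∃ α' ζ : ℝ, 0 < α' ∧ ∀ j k,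
        Matrix.trace (((d : ℂ) • (P j : Mat d)) * ((d : ℂ) • (P k : Mat d))) =
          if j = k then ((α' : ℂ) + (ζ : ℂ)) else (ζ : ℂ)) ↔
      (∃ z : ℂ, ∀ j k, j ≠ k →
        Matrix.trace ((P j : Mat d) * (P k : Mat d)) = z)) :=
  minimal_tightIC_genSIC_iffs_general d hd P α β htrpos hsum hIC hα hβ hframe
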